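/- arXiv:1603.03009 — 2 statements merged into one kernel-verified Lean document; each statement's English description precedes it below -/
import Mathlib

section
/- Suppose F₋ > 2F₊ > 0. Then for all w ∈ ℝ² with w₁ ≤ 0 ≤ w₂ (region A₁), D_sh(w) = (-w₁ + w₂)·F₊; for all w with w₁ ≥ 0 and w₁ ≥ -w₂ (region A₂), D_sh(w) = (2w₁ + w₂)·F₊; and for all w with w₂ ≤ 0 and w₁ ≤ -w₂ (region A₃), D_sh(w) = (-w₁ - 2w₂)·F₊. -/
/-!
Each `d Fp Fm` is the maximum of the linear maps `x ↦ s * x` with `s ∈ [-F₋, F₊]`. Bounding the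
three summands of `D w v` from below with slopes `s₁ + s₂ + s₃ = 0` cancels `v` and gives a bound
independent of `v`. Since `F₋ > 2F₊`, the slopes `(F₊, -2F₊, F₊)`, `(-2F₊, F₊, F₊)` and
`(F₊, F₊, -2F₊)` are admissible, and on the regions `A₁`, `A₂`, `A₃` the resulting bounds are attained
at `v = max {w₁, 0, -w₂}`, where all three arguments of `d` are nonnegative.
-/

noncomputable def d (Fp Fm x : ℝ) : ℝ := Fp * max x 0 - Fm * min x 0

noncomputable def D (Fp Fm : ℝ) (w : ℝ × ℝ) (v : ℝ) : ℝ :=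
  d Fp Fm (v - w.1) + d Fp Fm v + d Fp Fm (v + w.2)

noncomputable def Dsh (Fp Fm : ℝ) (w : ℝ × ℝ) : ℝ := ⨅ v : ℝ, D Fp Fm w v

open Set

section

variable {Fp Fm : ℝ}

lemma mul_le_d_of_mem_Icc {s : ℝ} (hs : s ∈ Icc (-Fm) Fp) (x : ℝ) : s * x ≤ d Fp Fm x := by
  obtain ⟨hFm, hFp⟩ := hs
  unfold d
  rcases le_total x 0 with hx | hx
  · rw [max_eq_right hx, min_eq_left hx]; nlinarith
  · rw [max_eq_left hx, min_eq_right hx]; nlinarith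

lemma d_of_nonneg {x : ℝ} (hx : 0 ≤ x) : d Fp Fm x = Fp * x := by
  simp [d, hx]

lemma le_D_of_mem_Icc {s₁ s₂ s₃ : ℝ} (h₁ : s₁ ∈ Icc (-Fm) Fp) (h₂ : s₂ ∈ Icc (-Fm) Fp)
    (h₃ : s₃ ∈ Icc (-Fm) Fp) (hsum : s₁ + s₂ + s₃ = 0) (w : ℝ × ℝ) (v : ℝ) :
    s₃ * w.2 - s₁ * w.1 ≤ D Fp Fm w v := by
  have := mul_le_d_of_mem_Icc h₁ (v - w.1)
  have := mul_le_d_of_mem_Icc h₂ v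
  have := mul_le_d_of_mem_Icc h₃ (v + w.2)
  have hv : s₃ * w.2 - s₁ * w.1 = s₁ * (v - w.1) + s₂ * v + s₃ * (v + w.2) := by
    linear_combination (-v) * hsum
  rw [hv, D]
  linarith

lemma D_of_nonneg {w : ℝ × ℝ} {v : ℝ} (h₁ : w.1 ≤ v) (h₂ : 0 ≤ v) (h₃ : -w.2 ≤ v) :
    D Fp Fm w v = Fp * (3 * v - w.1 + w.2) := by
  rw [D, d_of_nonneg (by linarith), d_of_nonneg h₂, d_of_nonneg (by linarith)]
  ring

lemma Dsh_eq_of_isLeast {w : ℝ × ℝ} {c : ℝ} (h : IsLeast (range (D Fp Fm w)) c) :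
    Dsh Fp Fm w = c :=
  h.csInf_eq

end

theorem Dsh_on_regions (Fp Fm : ℝ) (hp : 0 < Fp) (hm : 2 * Fp < Fm) :
    (∀ w : ℝ × ℝ, w.1 ≤ 0 → 0 ≤ w.2 → Dsh Fp Fm w = (-w.1 + w.2) * Fp) ∧
    (∀ w : ℝ × ℝ, 0 ≤ w.1 → -w.2 ≤ w.1 → Dsh Fp Fm w = (2 * w.1 + w.2) * Fp) ∧
    (∀ w : ℝ × ℝ, w.2 ≤ 0 → w.1 ≤ -w.2 → Dsh Fp Fm w = (-w.1 - 2 * w.2) * Fp) := by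
  have hFp : Fp ∈ Icc (-Fm) Fp := ⟨by linarith, le_rfl⟩
  have h2Fp : -2 * Fp ∈ Icc (-Fm) Fp := ⟨by linarith, by linarith⟩
  refine ⟨fun w h₁ h₂ => Dsh_eq_of_isLeast ⟨⟨0, ?_⟩, ?_⟩,
    fun w h₁ h₂ => Dsh_eq_of_isLeast ⟨⟨w.1, ?_⟩, ?_⟩,
    fun w h₁ h₂ => Dsh_eq_of_isLeast ⟨⟨-w.2, ?_⟩, ?_⟩⟩
  · rw [D_of_nonneg h₁ le_rfl (by linarith)]; ring
  · rintro _ ⟨v, rfl⟩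
    linarith [le_D_of_mem_Icc hFp h2Fp hFp (by ring) w v]
  · rw [D_of_nonneg le_rfl h₁ h₂]; ring
  · rintro _ ⟨v, rfl⟩
    linarith [le_D_of_mem_Icc h2Fp hFp hFp (by ring) w v]
  · rw [D_of_nonneg (by linarith) (by linarith) le_rfl]; ring
  · rintro _ ⟨v, rfl⟩
    linarith [le_D_of_mem_Icc hFp hFp h2Fp (by ring) w v]
end

section
/- Suppose F₋ > 2F₊ > 0 and let C*_A = conv{α₁, α₂, α₃} with α₁ = (-F₊, F₊), α₂ = (2F₊, F₊), α₃ = (-F₊, -2F₊). Then the subdifferential of D_sh at 0 equals C*_A, i.e., ξ ∈ ℝ² satisfies D_sh(w) ≥ ⟨ξ, w⟩ for all w ∈ ℝ² if and only if ξ ∈ C*_A. -/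
/-- Standard inner product on ℝ². -/
def dot (x y : ℝ × ℝ) : ℝ := x.1 * y.1 + x.2 * y.2

/-!
Every slope `a ∈ [-Fm, Fp]` gives a supporting line `a x ≤ d x`. Three slopes `a, b, c` at the
arguments `v - w₁, v, v + w₂` of `D` with `a + b + c = 0` cancel the dependence on `v`, so
`(-a, c)` is a subgradient of `Dsh` at `0`; the vertices of the triangle arise from the slope
triples `(Fp, -2Fp, Fp)`, `(-2Fp, Fp, Fp)` and `(Fp, Fp, -2Fp)`, admissible as `-Fm ≤ -2Fp`.
Conversely, testing a subgradient against `w = (0, 1), (-1, 0), (1, -1)`, where `D` takes the value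
`Fp` at `v = 0, 0, 1`, yields the three inequalities cutting out the triangle.
-/

lemma add_smul_mem_convexHull_triple {𝕜 E : Type*} [Field 𝕜] [LinearOrder 𝕜]
    [IsStrictOrderedRing 𝕜] [AddCommGroup E] [Module 𝕜 E] (p q r : E) {a b c : 𝕜} (ha : 0 ≤ a) (hb : 0 ≤ b) (hc : 0 ≤ c) (habc : a + b + c = 1) :
    a • p + b • q + c • r ∈ convexHull 𝕜 {p, q, r} := by
  have hmem := (convex_convexHull 𝕜 {p, q, r}).sum_mem (t := Finset.univ) (w := ![a, b, c])
    (z := ![p, q, r]) (by intro i _; fin_cases i <;> assumption)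
    (by simpa [Fin.sum_univ_three] using habc)
    (by intro i _; fin_cases i <;> apply subset_convexHull <;> simp)
  simpa [Fin.sum_univ_three] using hmem

lemma convex_setOf_forall_dot_le (f : ℝ × ℝ → ℝ) :
    Convex ℝ {ξ : ℝ × ℝ | ∀ w, dot ξ w ≤ f w} := by
  have hlin (w : ℝ × ℝ) : IsLinearMap ℝ (fun ξ : ℝ × ℝ ↦ dot ξ w) :=
    ⟨fun x y ↦ by simp only [dot, Prod.fst_add, Prod.snd_add]; ring,
     fun s x ↦ by simp only [dot, Prod.smul_fst, Prod.smul_snd, smul_eq_mul]; ring⟩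
  simpa only [Set.ofPred_forall] using
    convex_iInter fun w ↦ convex_halfSpace_le (hlin w) (f w)

section

variable {Fp Fm : ℝ}

lemma mul_le_d {a : ℝ} (ha : -Fm ≤ a) (ha' : a ≤ Fp) (x : ℝ) : a * x ≤ d Fp Fm x := by
  unfold d
  rcases le_total x 0 with hx | hx
  · rw [max_eq_right hx, min_eq_left hx]; nlinarith
  · rw [max_eq_left hx, min_eq_right hx]; nlinarith

lemma dot_le_D {a b c : ℝ} (ha : -Fm ≤ a) (ha' : a ≤ Fp) (hb : -Fm ≤ b) (hb' : b ≤ Fp)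
    (hc : -Fm ≤ c) (hc' : c ≤ Fp) (habc : a + b + c = 0) (w : ℝ × ℝ) (v : ℝ) :
    dot (-a, c) w ≤ D Fp Fm w v := by
  have h₁ := mul_le_d ha ha' (v - w.1)
  have h₂ := mul_le_d hb hb' v
  have h₃ := mul_le_d hc hc' (v + w.2)
  have hv : c * v = -(a * v) - b * v := by linear_combination v * habc
  simp only [dot, D]
  linarith

lemma dot_le_Dsh {a b c : ℝ} (ha : -Fm ≤ a) (ha' : a ≤ Fp) (hb : -Fm ≤ b) (hb' : b ≤ Fp)
    (hc : -Fm ≤ c) (hc' : c ≤ Fp) (habc : a + b + c = 0) (w : ℝ × ℝ) :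
    dot (-a, c) w ≤ Dsh Fp Fm w :=
  le_ciInf (dot_le_D ha ha' hb hb' hc hc' habc w)

lemma Dsh_le_D (hp : 0 ≤ Fp) (hm : 0 ≤ Fm) (w : ℝ × ℝ) (v : ℝ) :
    Dsh Fp Fm w ≤ D Fp Fm w v := by
  refine ciInf_le ⟨0, ?_⟩ v
  rintro _ ⟨u, rfl⟩
  simpa [dot] using dot_le_D (neg_nonpos.2 hm) hp (neg_nonpos.2 hm) hp (neg_nonpos.2 hm) hp
    (by norm_num) w u

lemma triangle_subset_subgradients (hp : 0 ≤ Fp) (hm : 2 * Fp ≤ Fm) :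
    ({(-Fp, Fp), (2 * Fp, Fp), (-Fp, -2 * Fp)} : Set (ℝ × ℝ)) ⊆
      {ξ | ∀ w, dot ξ w ≤ Dsh Fp Fm w} := by
  have h₁ : -Fm ≤ Fp := by linarith
  have h₂ : -Fm ≤ -2 * Fp := by linarith
  have h₃ : -2 * Fp ≤ Fp := by linarith
  rintro ξ (rfl | rfl | rfl) w
  · exact dot_le_Dsh h₁ le_rfl h₂ h₃ h₁ le_rfl (by ring) w
  · simpa using dot_le_Dsh h₂ h₃ h₁ le_rfl h₁ le_rfl (by ring) w
  · simpa using dot_le_Dsh h₁ le_rfl h₁ le_rfl h₂ h₃ (by ring) w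

lemma subgradient_bounds (hp : 0 ≤ Fp) (hm : 0 ≤ Fm) {ξ : ℝ × ℝ}
    (hξ : ∀ w, dot ξ w ≤ Dsh Fp Fm w) : ξ.2 ≤ Fp ∧ -Fp ≤ ξ.1 ∧ ξ.1 - ξ.2 ≤ Fp := by
  have h₁ : D Fp Fm (0, 1) 0 = Fp := by norm_num [D, d]
  have h₂ : D Fp Fm (-1, 0) 0 = Fp := by norm_num [D, d]
  have h₃ : D Fp Fm (1, -1) 1 = Fp := by norm_num [D, d]
  have e₁ := (hξ (0, 1)).trans (Dsh_le_D hp hm _ 0)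
  have e₂ := (hξ (-1, 0)).trans (Dsh_le_D hp hm _ 0)
  have e₃ := (hξ (1, -1)).trans (Dsh_le_D hp hm _ 1)
  simp only [dot, h₁, h₂, h₃] at e₁ e₂ e₃
  refine ⟨?_, ?_, ?_⟩ <;> linarith

lemma mem_triangle_of_bounds (hp : 0 < Fp) {ξ : ℝ × ℝ}
    (h₁ : ξ.2 ≤ Fp) (h₂ : -Fp ≤ ξ.1) (h₃ : ξ.1 - ξ.2 ≤ Fp) :
    ξ ∈ convexHull ℝ ({(-Fp, Fp), (2 * Fp, Fp), (-Fp, -2 * Fp)} : Set (ℝ × ℝ)) := by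
  have h3p : 0 < 3 * Fp := by linarith
  -- barycentric coordinates of `ξ`: each is the normalized slack of the opposite edge
  convert add_smul_mem_convexHull_triple (-Fp, Fp) (2 * Fp, Fp) (-Fp, -2 * Fp)
    (div_nonneg (by linarith : 0 ≤ Fp - ξ.1 + ξ.2) h3p.le)
    (div_nonneg (by linarith : 0 ≤ ξ.1 + Fp) h3p.le)
    (div_nonneg (by linarith : 0 ≤ Fp - ξ.2) h3p.le)
    (by field_simp; ring) using 1
  ext <;> simp only [Prod.fst_add, Prod.snd_add, Prod.smul_fst, Prod.smul_snd, smul_eq_mul] <;>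
    field_simp <;> ring

end

theorem subdiff_at_zero_A (Fp Fm : ℝ) (hp : 0 < Fp) (hm : 2 * Fp < Fm) :
    ∀ ξ : ℝ × ℝ,
      (∀ w : ℝ × ℝ, dot ξ w ≤ Dsh Fp Fm w) ↔
        ξ ∈ convexHull ℝ ({(-Fp, Fp), (2 * Fp, Fp), (-Fp, -2 * Fp)} : Set (ℝ × ℝ)) := by
  intro ξ
  constructor
  · intro hξ
    obtain ⟨h₁, h₂, h₃⟩ := subgradient_bounds hp.le (by linarith) hξ
    exact mem_triangle_of_bounds hp h₁ h₂ h₃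
  · intro hξ
    exact convexHull_min (triangle_subset_subgradients hp.le hm.le)
      (convex_setOf_forall_dot_le (Dsh Fp Fm)) hξ
end
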